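/- arXiv:2312.00741 — 3 statements merged into one kernel-verified Lean document; each statement's English description precedes it below -/
import Mathlib

section
/- (Lemma 1, good committee property.) Let 0 ≤ α < 1/2 and β = 1 − α. For every ε with 0 < ε < 1 there exists m₀ such that for all integers m ≥ m₀ and all integers W ≥ m, if X is a binomial random variable with parameters W and α·m/W and Y is a binomial random variable with parameters W and β·m/W, then P(X ≥ ⌈m/2⌉) + P(Y ≤ ⌊m/2⌋) ≤ ε; i.e., except with probability at most ε, the honest membership shares exceed m/2 and the adversarial membership shares are at most m/2 (the good committee property). -/
open Finset

/-!
Chebyshev's inequality for the two binomial tails. With `δ = 1/2 - α`, the threshold `m/2` lies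
at distance at least `δ m` from both means `α m` and `β m`, and each variance is at most its mean,
so the two tails together have mass at most `(α m + β m) / (δ m)^2 = 1 / (δ^2 m)`, which is below
`ε` once `m > 1 / (δ^2 ε)`.
-/

noncomputable def binomialMass (n : ℕ) (p : ℝ) (j : ℕ) : ℝ :=
  n.choose j * p ^ j * (1 - p) ^ (n - j)

lemma binomialMass_nonneg (n : ℕ) {p : ℝ} (hp0 : 0 ≤ p) (hp1 : p ≤ 1) (j : ℕ) :
    0 ≤ binomialMass n p j := by
  have : 0 ≤ 1 - p := by linarith
  unfold binomialMass
  positivity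

lemma sum_sq_sub_mul_binomialMass (n : ℕ) (p : ℝ) :
    ∑ j ∈ range (n + 1), ((n : ℝ) * p - j) ^ 2 * binomialMass n p j = n * p * (1 - p) := by
  simpa [bernsteinPolynomial, binomialMass, Polynomial.eval_finsetSum, nsmul_eq_mul, mul_comm,
    mul_assoc, mul_left_comm] using congrArg (Polynomial.eval p) (bernsteinPolynomial.variance ℝ n)

lemma sum_binomialMass_le_of_le_abs_sub {n : ℕ} {p : ℝ} (hp0 : 0 ≤ p) (hp1 : p ≤ 1)
    {s : Finset ℕ} (hs : s ⊆ range (n + 1)) {c : ℝ} (hc : 0 < c)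
    (hdist : ∀ j ∈ s, c ≤ |n * p - j|) :
    ∑ j ∈ s, binomialMass n p j ≤ n * p * (1 - p) / c ^ 2 := by
  have hmass := binomialMass_nonneg n hp0 hp1
  calc ∑ j ∈ s, binomialMass n p j
      ≤ ∑ j ∈ s, ((n : ℝ) * p - j) ^ 2 / c ^ 2 * binomialMass n p j := by
        refine sum_le_sum fun j hj => le_mul_of_one_le_left (hmass j) ?_
        rw [one_le_div (by positivity), ← sq_abs (n * p - j)]
        exact pow_le_pow_left₀ hc.le (hdist j hj) 2
    _ ≤ ∑ j ∈ range (n + 1), ((n : ℝ) * p - j) ^ 2 / c ^ 2 * binomialMass n p j :=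
        sum_le_sum_of_subset_of_nonneg hs fun j _ _ => mul_nonneg (by positivity) (hmass j)
    _ = n * p * (1 - p) / c ^ 2 := by
        simp_rw [div_mul_eq_mul_div, ← sum_div, sum_sq_sub_mul_binomialMass]

lemma sum_binomialMass_div_le_of_le_abs_sub {n : ℕ} {μ : ℝ} (hμ0 : 0 ≤ μ) (hμn : μ ≤ n)
    {s : Finset ℕ} (hs : s ⊆ range (n + 1)) {c : ℝ} (hc : 0 < c)
    (hdist : ∀ j ∈ s, c ≤ |μ - j|) :
    ∑ j ∈ s, binomialMass n (μ / n) j ≤ μ / c ^ 2 := by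
  have hmean : (n : ℝ) * (μ / n) = μ := by
    rcases Nat.eq_zero_or_pos n with rfl | hn
    · simp [le_antisymm (by simpa using hμn) hμ0]
    · field_simp
  have hp0 : 0 ≤ μ / n := by positivity
  have hp1 : μ / n ≤ 1 := div_le_one_of_le₀ hμn (Nat.cast_nonneg n)
  calc ∑ j ∈ s, binomialMass n (μ / n) j ≤ n * (μ / n) * (1 - μ / n) / c ^ 2 :=
        sum_binomialMass_le_of_le_abs_sub hp0 hp1 hs hc (by rwa [hmean])
    _ ≤ μ / c ^ 2 := by
        rw [hmean]
        gcongr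
        exact mul_le_of_le_one_right hμ0 (by linarith)

theorem crystal_good_committee_general (α : ℝ) (hα0 : 0 ≤ α) (hα : α < 1 / 2)
    (β : ℝ) (hβ : β = 1 - α) (ε : ℝ) (hε0 : 0 < ε) :
    ∃ m₀ : ℕ, ∀ m : ℕ, m₀ ≤ m → ∀ W : ℕ, m ≤ W →
      (∑ j ∈ Finset.Icc (⌈(m : ℝ) / 2⌉₊) W,
          (W.choose j : ℝ) * (α * m / W) ^ j * (1 - α * m / W) ^ (W - j))
      + (∑ j ∈ Finset.Iic (⌊(m : ℝ) / 2⌋₊),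
          (W.choose j : ℝ) * (β * m / W) ^ j * (1 - β * m / W) ^ (W - j))
        ≤ ε := by
  set δ := 1 / 2 - α with hδ_def
  have hδ : 0 < δ := by linarith
  refine ⟨⌈1 / (δ ^ 2 * ε)⌉₊ + 1, fun m hm W hW => ?_⟩
  have hm_large : 1 / (δ ^ 2 * ε) < m := Nat.lt_of_ceil_lt hm
  have hm0 : (0 : ℝ) < m := lt_trans (by positivity) hm_large
  have hmW : (m : ℝ) ≤ W := by exact_mod_cast hW
  have hδm : δ * m = m / 2 - α * m := by ring
  have upper : ∑ j ∈ Icc ⌈(m : ℝ) / 2⌉₊ W, binomialMass W (α * m / W) j ≤ α * m / (δ * m) ^ 2 := by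
    refine sum_binomialMass_div_le_of_le_abs_sub (by positivity) (by nlinarith)
      (fun j hj => mem_range_succ_iff.mpr (mem_Icc.mp hj).2) (by positivity) fun j hj => ?_
    have hj : (m : ℝ) / 2 ≤ j := Nat.ceil_le.mp (mem_Icc.mp hj).1
    rw [abs_sub_comm]
    exact le_abs.mpr (Or.inl (by linarith))
  have lower : ∑ j ∈ Iic ⌊(m : ℝ) / 2⌋₊, binomialMass W (β * m / W) j ≤ β * m / (δ * m) ^ 2 := by
    have hfloor : ⌊(m : ℝ) / 2⌋₊ ≤ W := Nat.floor_le_of_le (by linarith)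
    refine sum_binomialMass_div_le_of_le_abs_sub (by rw [hβ]; nlinarith) (by rw [hβ]; nlinarith)
      (fun j hj => mem_range_succ_iff.mpr ((mem_Iic.mp hj).trans hfloor)) (by positivity)
      fun j hj => ?_
    have hj : (j : ℝ) ≤ m / 2 := (Nat.le_floor_iff (by positivity)).mp (mem_Iic.mp hj)
    exact le_abs.mpr (Or.inl (by rw [hβ]; linarith))
  calc _ ≤ α * m / (δ * m) ^ 2 + β * m / (δ * m) ^ 2 := add_le_add upper lower
    _ = 1 / (δ ^ 2 * m) := by rw [hβ]; field_simp; ring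
    _ ≤ ε := by
        rw [div_lt_iff₀ (by positivity)] at hm_large
        rw [div_le_iff₀ (by positivity)]
        nlinarith

/-- Lemma 1, good committee property: for `0 ≤ α < 1/2`, `β = 1 - α`, and any
`0 < ε < 1`, there is `m₀` such that for all `m ≥ m₀` and `W ≥ m`, with
`X ~ Binomial(W, α·m/W)` and `Y ~ Binomial(W, β·m/W)`,
`P(X ≥ ⌈m/2⌉) + P(Y ≤ ⌊m/2⌋) ≤ ε`. Both probabilities are written explicitly as sums of the
binomial mass functions. -/
theorem crystal_good_committee (α : ℝ) (hα0 : 0 ≤ α) (hα : α < 1 / 2)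
    (β : ℝ) (hβ : β = 1 - α) (ε : ℝ) (hε0 : 0 < ε) (hε1 : ε < 1) :
    ∃ m₀ : ℕ, ∀ m : ℕ, m₀ ≤ m → ∀ W : ℕ, m ≤ W →
      (∑ j ∈ Finset.Icc (⌈(m : ℝ) / 2⌉₊) W,
          (W.choose j : ℝ) * (α * m / W) ^ j * (1 - α * m / W) ^ (W - j))
      + (∑ j ∈ Finset.Iic (⌊(m : ℝ) / 2⌋₊),
          (W.choose j : ℝ) * (β * m / W) ^ j * (1 - β * m / W) ^ (W - j))
        ≤ ε :=
  crystal_good_committee_general α hα0 hα β hβ ε hε0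
end

section
/- Let 0 ≤ α < 1, β = 1 − α, and 0 ≤ γ ≤ 1, and let π₀ = β/(1+αβ), π₀′ = αβ/(1+αβ). Define r_a = π₀′·α·2 + π₀′·γβ and r_others = π₀·β + π₀′·γβ + π₀′·(1−γ)β·2. Then r_a = αβ(2α+γβ)/(1+αβ), r_others = β²(1+2α−γα)/(1+αβ), and r_a/(r_a + r_others) = α(2α+γβ)/(β+2α). -/
/-- closed forms of the attacker's and honest participants' main-chain block
rates in the selfish-mining Markov chain of Crystal, and the attacker's fraction. -/
theorem crystal_reward_rates (α β γ : ℝ) (hα0 : 0 ≤ α) (hα1 : α < 1)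
    (hβ : β = 1 - α) (hγ0 : 0 ≤ γ) (hγ1 : γ ≤ 1)
    (π₀ π₀' : ℝ) (hπ₀ : π₀ = β / (1 + α * β)) (hπ₀' : π₀' = α * β / (1 + α * β))
    (r_a r_others : ℝ)
    (hra : r_a = π₀' * α * 2 + π₀' * (γ * β))
    (hro : r_others = π₀ * β + π₀' * (γ * β) + π₀' * ((1 - γ) * β) * 2) :
    r_a = α * β * (2 * α + γ * β) / (1 + α * β) ∧
    r_others = β ^ 2 * (1 + 2 * α - γ * α) / (1 + α * β) ∧
    r_a / (r_a + r_others) = α * (2 * α + γ * β) / (β + 2 * α) := by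
  have hβpos : 0 < β := by rw [hβ]; linarith
  have hden : 0 < 1 + α * β := by positivity
  have hden' : (1 + α * β) ≠ 0 := ne_of_gt hden
  have hsum : 0 < β + 2 * α := by linarith
  have h1 : r_a = α * β * (2 * α + γ * β) / (1 + α * β) := by
    rw [hra, hπ₀']; field_simp
  have h2 : r_others = β ^ 2 * (1 + 2 * α - γ * α) / (1 + α * β) := by
    rw [hro, hπ₀, hπ₀']; field_simp; ring
  refine ⟨h1, h2, ?_⟩
  have hsum_eq : r_a + r_others = β * (β + 2 * α) / (1 + α * β) := by
    rw [h1, h2, hβ]; field_simp; ring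
  have hb := hβpos.ne'
  have hs := hsum.ne'
  rw [hsum_eq, h1]
  field_simp
end

section
/- (Converged block count, Lemma 4 conditional form.) There exists a constant c > 0 such that the following holds. Let λ > 0, Δ ≥ 0, and let X₁, …, X_{n+1} be i.i.d. exponential random variables with rate λ. Set η = e^{−2λΔ}, and for i ∈ {1, …, n} let Y_i be the indicator of the event {X_i ≥ 2Δ and X_{i+1} ≥ 2Δ} (so P(Y_i = 1) = η²), and Y = Σ_{i=1}^n Y_i. Then for every δ with 0 < δ < 1, P(Y ≤ (1−δ)·η²·n) ≤ 2·exp(−c·δ²·η²·n). -/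
/-!
The indicators `Y_i` are only 1-dependent, but two indicators of the same parity look at disjoint
pairs of the `X_k`, so each parity class is a family of independent events of probability
`p = η²`. If `Y ≤ (1 - δ) p n`, then one of the two classes, each of size at least `n / 4` once
`n ≥ 2`, has its sum below `(1 - δ) p` times its size. The multiplicative Chernoff bound
`P(S ≤ (1 - δ) p m) ≤ exp (-δ² p m / 2)` for each class then gives the claim with `c = 1 / 8`.
-/

open MeasureTheory ProbabilityTheory Finset Real Function

theorem Real.exp_neg_le_one_sub_add_sq_div_two {x : ℝ} (hx : 0 ≤ x) :
    exp (-x) ≤ 1 - x + x ^ 2 / 2 := by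
  have hderiv : ∀ y, HasDerivAt (fun y => exp y * (1 - y + y ^ 2 / 2)) (exp y * (y ^ 2 / 2)) y :=
    fun y => ((hasDerivAt_exp y).mul (((hasDerivAt_id' y).const_sub 1).add
      ((hasDerivAt_pow 2 y).div_const 2))).congr_deriv (by simp only [Pi.add_apply]; ring)
  have hmono : Monotone fun y => exp y * (1 - y + y ^ 2 / 2) := monotone_of_deriv_nonneg
    (fun y => (hderiv y).differentiableAt) fun y => (hderiv y).deriv ▸ by positivity
  have := hmono hx
  simp only [exp_zero] at this
  rw [exp_neg, inv_le_iff_one_le_mul₀ (exp_pos x)]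
  linarith

theorem measureReal_expMeasure_Ici {r a : ℝ} (hr : 0 < r) (ha : 0 ≤ a) :
    (expMeasure r).real (Set.Ici a) = exp (-(r * a)) := by
  have := isProbabilityMeasure_expMeasure hr
  have hatom : expMeasure r {a} = 0 :=
    withDensity_absolutelyContinuous _ _ (Real.volume_singleton)
  rw [measureReal_congr (Ioi_ae_eq_Ici' hatom).symm, ← Set.compl_Iic,
    measureReal_compl measurableSet_Iic, ← cdf_eq_real, cdf_expMeasure_eq hr, if_pos ha,
    probReal_univ]
  ring

theorem Real.exp_mul_indicator_one {α : Type*} (A : Set α) (t : ℝ) :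
    (fun x => exp (t * A.indicator 1 x)) = fun x => 1 + (exp t - 1) * A.indicator 1 x := by
  ext x
  by_cases h : x ∈ A <;> simp [h]

section Independence

variable {Ω ι κ β : Type*} [MeasurableSpace Ω] [MeasurableSpace β] {μ : Measure Ω}
  {X : κ → Ω → β} {S : κ → Set β}

theorem ProbabilityTheory.iIndepFun.measure_biInter_preimage (hX : iIndepFun X μ)
    (hS : ∀ i, MeasurableSet (S i)) (s : Finset κ) :
    μ (⋂ i ∈ s, X i ⁻¹' S i) = ∏ i ∈ s, μ (X i ⁻¹' S i) :=
  hX.meas_biInter fun i _ => ⟨S i, hS i, rfl⟩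

theorem ProbabilityTheory.iIndepFun.iIndepSet_biInter_preimage (hX : iIndepFun X μ)
    (hXm : ∀ i, Measurable (X i)) (hS : ∀ i, MeasurableSet (S i)) {J : ι → Finset κ}
    (hJ : Pairwise (Disjoint on J)) :
    iIndepSet (fun j => ⋂ i ∈ J j, X i ⁻¹' S i) μ := by
  classical
  refine (iIndepSet_iff_meas_biInter fun j =>
    Finset.measurableSet_biInter _ fun i _ => hXm i (hS i)).2 fun T => ?_
  rw [← Finset.set_biInter_biUnion, hX.measure_biInter_preimage hS,
    Finset.prod_biUnion (hJ.set_pairwise _)]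
  exact Finset.prod_congr rfl fun j _ => (hX.measure_biInter_preimage hS _).symm

end Independence

section Chernoff

variable {Ω ι : Type*} [MeasurableSpace Ω] {μ : Measure Ω}

theorem integrable_exp_mul_indicator_one [IsFiniteMeasure μ] {A : Set Ω} (hA : MeasurableSet A)
    (t : ℝ) : Integrable (fun ω => exp (t * A.indicator 1 ω)) μ := by
  rw [exp_mul_indicator_one]
  exact (integrable_const 1).add (((integrable_const 1).indicator hA).const_mul _)

variable [IsProbabilityMeasure μ]

theorem ProbabilityTheory.mgf_indicator_one {A : Set Ω} (hA : MeasurableSet A) (t : ℝ) :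
    mgf (A.indicator 1) μ t = 1 + (exp t - 1) * μ.real A := by
  rw [mgf, exp_mul_indicator_one, integral_add (integrable_const 1)
    (((integrable_const 1).indicator hA).const_mul _), integral_const_mul,
    integral_indicator_one hA]
  simp

/-- Multiplicative Chernoff bound for the lower tail, from the exponential Markov inequality at
`t = -δ` and `exp (-δ) ≤ 1 - δ + δ ^ 2 / 2`. -/
theorem ProbabilityTheory.measureReal_sum_indicator_le_le_exp [Fintype ι] {A : ι → Set Ω}
    (hA : ∀ i, MeasurableSet (A i)) (hind : iIndepSet A μ) {p : ℝ}
    (hp : ∀ i, μ.real (A i) = p) {δ : ℝ} (hδ : 0 ≤ δ) :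
    μ.real {ω | ∑ i, (A i).indicator 1 ω ≤ (1 - δ) * p * Fintype.card ι}
      ≤ exp (-(δ ^ 2 * p * Fintype.card ι / 2)) := by
  have hYm : ∀ i, Measurable ((A i).indicator (1 : Ω → ℝ)) := fun i =>
    measurable_const.indicator (hA i)
  have hindf : iIndepFun (fun i => (A i).indicator (1 : Ω → ℝ)) μ := hind.iIndepFun_indicator
  have hfactor : ∀ i, 1 + (exp (-δ) - 1) * μ.real (A i) ≤ exp ((-δ + δ ^ 2 / 2) * p) := by
    intro i
    have hp0 : 0 ≤ p := hp i ▸ measureReal_nonneg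
    rw [hp]
    calc 1 + (exp (-δ) - 1) * p ≤ (-δ + δ ^ 2 / 2) * p + 1 := by
          nlinarith [exp_neg_le_one_sub_add_sq_div_two hδ]
      _ ≤ _ := add_one_le_exp _
  have hchernoff := measure_le_le_exp_mul_mgf (X := ∑ i, (A i).indicator 1)
    ((1 - δ) * p * Fintype.card ι) (neg_nonpos.2 hδ)
    (hindf.integrable_exp_mul_sum hYm fun i _ => integrable_exp_mul_indicator_one (hA i) _)
  rw [hindf.mgf_sum hYm] at hchernoff
  simp only [mgf_indicator_one (hA _), Finset.sum_apply] at hchernoff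
  calc _ ≤ _ := hchernoff
    _ ≤ exp (δ * ((1 - δ) * p * Fintype.card ι)) * ∏ _i : ι, exp ((-δ + δ ^ 2 / 2) * p) := by
        rw [neg_neg]
        gcongr
        · intro i _
          have := measureReal_le_one (μ := μ) (s := A i)
          nlinarith [exp_pos (-δ), measureReal_nonneg (μ := μ) (s := A i)]
        · exact hfactor _
    _ = exp (-(δ ^ 2 * p * Fintype.card ι / 2)) := by
        rw [prod_const, card_univ, ← exp_nat_mul, ← exp_add]
        ring_nf

end Chernoff

theorem Fintype.sum_comp_le_sum_of_injective {ι κ : Type*} [Fintype ι] [Fintype κ] {g : ι → κ}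
    (hg : Injective g) {f : κ → ℝ} (hf : 0 ≤ f) : ∑ i, f (g i) ≤ ∑ k, f k := by
  classical
  rw [← Finset.sum_image hg.injOn]
  exact sum_le_sum_of_subset_of_nonneg (subset_univ _) fun k _ _ => hf k

/-- There are `(n + 1 - r) / 2` indices of parity `r < 2` in `Fin n`. -/
def parityIndex (n r : ℕ) (j : Fin ((n + 1 - r) / 2)) : Fin n := ⟨2 * j + r, by omega⟩

def adjacentPair {n : ℕ} (i : Fin n) : Finset (Fin (n + 1)) := {i.castSucc, i.succ}

theorem pairwise_disjoint_adjacentPair_parityIndex (n r : ℕ) :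
    Pairwise (Disjoint on fun j => adjacentPair (parityIndex n r j)) := by
  intro j l hjl
  rw [onFun, Finset.disjoint_left]
  simp only [adjacentPair, parityIndex, mem_insert, mem_singleton, Fin.ext_iff, Fin.val_castSucc,
    Fin.val_succ]
  have := Fin.val_ne_of_ne hjl
  omega

theorem sum_parityIndex_add_sum_parityIndex_le {n : ℕ} {f : Fin n → ℝ} (hf : 0 ≤ f) :
    ∑ j, f (parityIndex n 0 j) + ∑ j, f (parityIndex n 1 j) ≤ ∑ i, f i := by
  have := Fintype.sum_comp_le_sum_of_injective
    (g := Sum.elim (parityIndex n 0) (parityIndex n 1)) ?_ hf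
  · simpa only [Fintype.sum_sum_type, Sum.elim_inl, Sum.elim_inr] using this
  rintro (j | j) (l | l) h <;> simp only [Sum.elim_inl, Sum.elim_inr, parityIndex, Fin.ext_iff] at h
    <;> simp only [Sum.inl.injEq, Sum.inr.injEq, reduceCtorEq, Fin.ext_iff] <;> omega

theorem setOf_sum_le_subset_parityIndex {Ω : Type*} {n : ℕ} {f : Ω → Fin n → ℝ}
    (hf : ∀ ω, 0 ≤ f ω) (c : ℝ) :
    {ω | ∑ i, f ω i ≤ c * n} ⊆
      {ω | ∑ j, f ω (parityIndex n 0 j) ≤ c * ((n + 1 - 0) / 2 : ℕ)} ∪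
      {ω | ∑ j, f ω (parityIndex n 1 j) ≤ c * ((n + 1 - 1) / 2 : ℕ)} := by
  have hsplit : (n : ℝ) = ((n + 1 - 0) / 2 : ℕ) + ((n + 1 - 1) / 2 : ℕ) := by
    exact_mod_cast (by omega : n = (n + 1 - 0) / 2 + (n + 1 - 1) / 2)
  intro ω hω
  by_contra h
  simp only [Set.mem_union, Set.mem_ofPred_eq, not_or, not_le] at hω h
  rw [hsplit, mul_add] at hω
  linarith [sum_parityIndex_add_sum_parityIndex_le (hf ω)]

section ConvergedBlocks

variable {Ω : Type*} {n : ℕ} {X : Fin (n + 1) → Ω → ℝ} {a : ℝ}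

def convergedSet (X : Fin (n + 1) → Ω → ℝ) (a : ℝ) (i : Fin n) : Set Ω :=
  ⋂ k ∈ adjacentPair i, X k ⁻¹' Set.Ici a

theorem mem_convergedSet {i : Fin n} {ω : Ω} :
    ω ∈ convergedSet X a i ↔ a ≤ X i.castSucc ω ∧ a ≤ X i.succ ω := by
  simp [convergedSet, adjacentPair]

variable [MeasurableSpace Ω] {μ : Measure Ω}

theorem measurableSet_convergedSet (hXm : ∀ k, Measurable (X k)) (i : Fin n) :
    MeasurableSet (convergedSet X a i) :=
  Finset.measurableSet_biInter _ fun k _ => hXm k measurableSet_Ici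

theorem measureReal_convergedSet {lam : ℝ} (hlam : 0 < lam) (ha : 0 ≤ a)
    (hXm : ∀ k, Measurable (X k)) (hX : iIndepFun X μ)
    (hmap : ∀ k, μ.map (X k) = expMeasure lam) (i : Fin n) :
    μ.real (convergedSet X a i) = exp (-(lam * a)) ^ 2 := by
  have htail : ∀ k, μ.real (X k ⁻¹' Set.Ici a) = exp (-(lam * a)) := fun k => by
    rw [← map_measureReal_apply (hXm k) measurableSet_Ici, hmap, measureReal_expMeasure_Ici hlam ha]
  rw [measureReal_def, convergedSet, hX.measure_biInter_preimage fun _ => measurableSet_Ici,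
    adjacentPair, prod_pair Fin.castSucc_lt_succ.ne, ENNReal.toReal_mul, ← measureReal_def,
    ← measureReal_def, htail, htail, sq]

theorem iIndepSet_convergedSet_parityIndex (hXm : ∀ k, Measurable (X k)) (hX : iIndepFun X μ)
    (r : ℕ) : iIndepSet (fun j => convergedSet X a (parityIndex n r j)) μ :=
  hX.iIndepSet_biInter_preimage hXm (fun _ => measurableSet_Ici)
    (pairwise_disjoint_adjacentPair_parityIndex n r)

variable [IsProbabilityMeasure μ] {lam δ : ℝ}

theorem measureReal_sum_convergedSet_parityIndex_le (hlam : 0 < lam) (ha : 0 ≤ a)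
    (hXm : ∀ k, Measurable (X k)) (hX : iIndepFun X μ)
    (hmap : ∀ k, μ.map (X k) = expMeasure lam) (hδ : 0 ≤ δ) (r : ℕ) :
    μ.real {ω | ∑ j, (convergedSet X a (parityIndex n r j)).indicator 1 ω
        ≤ (1 - δ) * exp (-(lam * a)) ^ 2 * ((n + 1 - r) / 2 : ℕ)}
      ≤ exp (-(δ ^ 2 * exp (-(lam * a)) ^ 2 * ((n + 1 - r) / 2 : ℕ) / 2)) := by
  simpa only [Fintype.card_fin] using measureReal_sum_indicator_le_le_exp
    (fun j => measurableSet_convergedSet hXm _) (iIndepSet_convergedSet_parityIndex hXm hX r)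
    (fun j => measureReal_convergedSet hlam ha hXm hX hmap _) hδ

theorem measureReal_sum_convergedSet_le (hlam : 0 < lam) (ha : 0 ≤ a)
    (hXm : ∀ k, Measurable (X k)) (hX : iIndepFun X μ)
    (hmap : ∀ k, μ.map (X k) = expMeasure lam) (hδ₀ : 0 ≤ δ) (hδ₁ : δ ≤ 1) :
    μ.real {ω | ∑ i, (convergedSet X a i).indicator 1 ω ≤ (1 - δ) * exp (-(lam * a)) ^ 2 * n}
      ≤ 2 * exp (-(δ ^ 2 * exp (-(lam * a)) ^ 2 * n / 8)) := by
  set p := exp (-(lam * a)) ^ 2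
  have hp₀ : 0 ≤ p := by positivity
  rcases lt_or_ge n 2 with hn | hn
  · have hp₁ : p ≤ 1 := pow_le_one₀ (exp_nonneg _) (exp_le_one_iff.2 (by nlinarith))
    have hn₁ : (n : ℝ) ≤ 1 := by exact_mod_cast Nat.lt_succ_iff.1 hn
    have hsmall : δ ^ 2 * p * n ≤ 1 := by
      have : δ ^ 2 * p ≤ 1 := mul_le_one₀ (pow_le_one₀ hδ₀ hδ₁) hp₀ hp₁
      exact mul_le_one₀ this (by positivity) hn₁
    calc _ ≤ 1 := measureReal_le_one
      _ ≤ 2 * exp (-(δ ^ 2 * p * n / 8)) := by linarith [add_one_le_exp (-(δ ^ 2 * p * n / 8))]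
  have hsub := setOf_sum_le_subset_parityIndex
    (f := fun ω i => (convergedSet X a i).indicator 1 ω)
    (fun ω i => Set.indicator_nonneg (fun _ _ => zero_le_one) ω) ((1 - δ) * p)
  have htail : ∀ r ≤ 1, exp (-(δ ^ 2 * p * ((n + 1 - r) / 2 : ℕ) / 2))
      ≤ exp (-(δ ^ 2 * p * n / 8)) := fun r hr => by
    have : (n : ℝ) ≤ 4 * ((n + 1 - r) / 2 : ℕ) := by exact_mod_cast (by omega)
    have hδp : 0 ≤ δ ^ 2 * p := by positivity
    exact exp_le_exp.2 (by nlinarith [mul_le_mul_of_nonneg_left this hδp])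
  calc _ ≤ _ := (measureReal_mono hsub).trans (measureReal_union_le _ _)
    _ ≤ _ := add_le_add
        (measureReal_sum_convergedSet_parityIndex_le hlam ha hXm hX hmap hδ₀ 0)
        (measureReal_sum_convergedSet_parityIndex_le hlam ha hXm hX hmap hδ₀ 1)
    _ ≤ _ := by linarith [htail 0 zero_le_one, htail 1 le_rfl]

end ConvergedBlocks

/-- converged block count, Lemma 4 conditional form: there is `c > 0` such
that for all `λ > 0`, `Δ ≥ 0`, and i.i.d. exponential(λ) random variables
`X₁, …, X_{n+1}` (indexed by `Fin (n+1)`), with `η = e^{−2λΔ}` and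
`Y_i = 𝟙{X_i ≥ 2Δ ∧ X_{i+1} ≥ 2Δ}` for `i ∈ {1, …, n}`, `Y = Σ_i Y_i`, we have for every
`0 < δ < 1` that `P(Y ≤ (1−δ)·η²·n) ≤ 2·exp(−c·δ²·η²·n)`. -/
theorem converged_block_count :
    ∃ c : ℝ, 0 < c ∧
      ∀ (lam Δ : ℝ), 0 < lam → 0 ≤ Δ →
      ∀ (n : ℕ) (Ω : Type) (mΩ : MeasurableSpace Ω) (μ : Measure Ω),
        IsProbabilityMeasure μ →
      ∀ (X : Fin (n + 1) → Ω → ℝ),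
        (∀ i, Measurable (X i)) →
        iIndepFun X μ →
        (∀ i, μ.map (X i) = expMeasure lam) →
        ∀ δ : ℝ, 0 < δ → δ < 1 →
          μ {ω | ∑ i : Fin n,
                (if 2 * Δ ≤ X i.castSucc ω ∧ 2 * Δ ≤ X i.succ ω then (1 : ℝ) else 0) ≤
                (1 - δ) * Real.exp (-(2 * lam * Δ)) ^ 2 * n}
            ≤ ENNReal.ofReal
                (2 * Real.exp (-(c * δ ^ 2 * Real.exp (-(2 * lam * Δ)) ^ 2 * n))) := by
  refine ⟨1 / 8, by norm_num, fun lam Δ hlam hΔ n Ω _ μ _ X hXm hX hmap δ hδ₀ hδ₁ => ?_⟩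
  have hsummand : ∀ ω (i : Fin n),
      (if 2 * Δ ≤ X i.castSucc ω ∧ 2 * Δ ≤ X i.succ ω then (1 : ℝ) else 0)
        = (convergedSet X (2 * Δ) i).indicator 1 ω := fun ω i => by
    classical
    simp only [Set.indicator_apply, mem_convergedSet, Pi.one_apply]
  rw [ENNReal.le_ofReal_iff_toReal_le (measure_ne_top _ _) (by positivity), ← measureReal_def]
  simp only [hsummand, show 2 * lam * Δ = lam * (2 * Δ) by ring]
  convert measureReal_sum_convergedSet_le (a := 2 * Δ) hlam (by linarith) hXm hX hmap
    hδ₀.le hδ₁.le using 3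
  ring
end
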